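/- arXiv:2207.01421 — 2 statements merged into one kernel-verified Lean document; each statement's English description precedes it below -/
import Mathlib

section
/- Fix L > 0. For every square-summable ψ : ℤ' → ℝ and every a ∈ ℤ', the series (𝒥ψ)(a) := Σ_{b∈ℤ'} J_{a+b}(2L) ψ(b) converges absolutely; moreover the resulting function 𝒥ψ : ℤ' → ℝ is square-summable with Σ_{a∈ℤ'} (𝒥ψ)(a)² = Σ_{b∈ℤ'} ψ(b)², and 𝒥(𝒥ψ) = ψ. (In other words, the kernel J_{a+b}(2L) induces a unitary involution of ℓ²(ℤ').) -/
/-!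
Bessel functions of the first kind of integer order and argument `2L`:
`J_n(2L) = ∑_{j≥0} (-1)^j L^{2j+n}/(j!(n+j)!)` for `n ≥ 0`, and `J_{-n} = (-1)^n J_n`.

Half-integers `ℤ' = ℤ + 1/2` are parametrized by `ℤ`: the half-integer `a = m + 1/2`
corresponds to `m : ℤ`; for `a = m + 1/2` and `b = n + 1/2` the order `a + b = m + n + 1 ∈ ℤ`.
A function `ψ : ℤ' → ℝ` is represented as `ψ : ℤ → ℝ`.
-/
noncomputable def besselJnat (L : ℝ) (n : ℕ) : ℝ :=
  ∑' j : ℕ, (-1 : ℝ) ^ j * L ^ (2 * j + n) / (Nat.factorial j * Nat.factorial (n + j))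

noncomputable def besselJint (L : ℝ) (n : ℤ) : ℝ :=
  if 0 ≤ n then besselJnat L n.toNat else (-1 : ℝ) ^ (-n).toNat * besselJnat L (-n).toNat

/-!
Write `J_n(2L) = ∑_{p - q = n} L^p (-L)^q / (p! q!)`, the coefficient of `t^n` in
`e^{Lt} e^{-L/t}`. Then `n ↦ J_n(2L)` is absolutely summable, and the identity
`e^{Lt} e^{-L/t} · e^{L/t} e^{-Lt} = 1` becomes the orthonormality `∑_n J_{i+n} J_{j+n} = δ_{ij}`
of the rows of the kernel: after regrouping the fourfold sum by degrees it reduces to the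
binomial identity `∑_{p+q=N} L^p (-L)^q / (p! q!) = 0^N / N!`.

A Hankel kernel `k (m + n)` with `k ∈ ℓ¹` acts boundedly and symmetrically on `ℓ²(ℤ)`
(weighted Cauchy–Schwarz). Orthonormal rows make the operator `T` an involution, and symmetry
then gives `‖Tψ‖² = ⟨ψ, T²ψ⟩ = ‖ψ‖²`.
-/

open Finset

section General

variable {ι β γ : Type*} [DecidableEq γ]

lemma Summable.abs_mul_of_sq {f g : ι → ℝ} (hf : Summable fun i => f i ^ 2)
    (hg : Summable fun i => g i ^ 2) : Summable fun i => |f i * g i| :=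
  ((hf.add hg).div_const 2).of_nonneg_of_le (fun _ => abs_nonneg _) fun i => by
    have := two_mul_le_add_sq |f i| |g i|
    rw [sq_abs, sq_abs] at this
    rw [abs_mul]
    linarith

lemma Summable.sq_of_abs {f : ι → ℝ} (hf : Summable fun i => |f i|) :
    Summable fun i => f i ^ 2 :=
  (hf.mul_left (∑' i, |f i|)).of_nonneg_of_le (fun _ => sq_nonneg _) fun i => by
    rw [← sq_abs, sq]
    exact mul_le_mul_of_nonneg_right (hf.le_tsum i fun j _ => abs_nonneg _) (abs_nonneg _)

lemma tsum_sq_le_tsum_mul_tsum_of_sq_le_mul {r f g : ι → ℝ} (hr : Summable r)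
    (hf : Summable f) (hg : Summable g) (hf₀ : ∀ i, 0 ≤ f i) (hg₀ : ∀ i, 0 ≤ g i)
    (h : ∀ i, r i ^ 2 ≤ f i * g i) : (∑' i, r i) ^ 2 ≤ (∑' i, f i) * ∑' i, g i :=
  le_of_tendsto_of_tendsto' (hr.hasSum.pow 2) (Filter.Tendsto.mul hf.hasSum hg.hasSum) fun s =>
    sum_sq_le_sum_mul_sum_of_sq_le_mul s (fun i _ => hf₀ i) (fun i _ => hg₀ i) fun i _ => h i

lemma HasSum.tsum_ite_fiberwise {f : β → ℝ} {a : ℝ} (hf : HasSum f a) (g : β → γ) :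
    HasSum (fun c => ∑' b, if g b = c then f b else 0) a := by
  have hfiber :
      (fun c => ∑' b, if g b = c then f b else 0) = fun c => ∑' b : g ⁻¹' {c}, f b :=
    funext fun c => by
      rw [_root_.tsum_subtype]
      congr with b
      by_cases hb : g b = c <;> simp [hb]
  rw [hfiber]
  exact hf.tsum_fiberwise g

lemma tsum_mul_comp_eq_tsum_fiberwise {f : β → ℝ} (F : γ → ℝ) (g : β → γ)
    (h : Summable fun b => f b * F (g b)) :
    ∑' b, f b * F (g b) = ∑' c, (∑' b, if g b = c then f b else 0) * F c := by
  rw [← (h.hasSum.tsum_ite_fiberwise g).tsum_eq]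
  refine tsum_congr fun c => ?_
  rw [← tsum_mul_right]
  refine tsum_congr fun b => ?_
  split_ifs with hb
  · rw [hb]
  · rw [zero_mul]

open Nat in
lemma sum_antidiagonal_pow_div_factorial_mul (x y : ℝ) (N : ℕ) :
    ∑ p ∈ antidiagonal N, x ^ p.1 / p.1 ! * (y ^ p.2 / p.2 !) = (x + y) ^ N / N ! := by
  rw [(Commute.all x y).add_pow', Finset.sum_div]
  refine Finset.sum_congr rfl fun p hp => ?_
  rw [nsmul_eq_mul, ← mem_antidiagonal.mp hp, Nat.cast_add_choose]
  field_simp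

lemma tsum_ite_sub_eq_natCast (f : ℕ × ℕ → ℝ) (m : ℕ) :
    ∑' x : ℕ × ℕ, (if (x.1 : ℤ) - x.2 = m then f x else 0) = ∑' j, f (m + j, j) := by
  have hinj : Function.Injective fun j : ℕ => (m + j, j) := fun i j h => (Prod.ext_iff.mp h).2
  rw [← hinj.tsum_eq]
  · exact tsum_congr fun j => if_pos (by push_cast; ring)
  · intro x hx
    have hfiber : (x.1 : ℤ) - x.2 = m := by
      by_contra h
      exact hx (if_neg h)
    exact ⟨x.2, Prod.ext (by simp; omega) rfl⟩

lemma tsum_ite_sub_eq_neg_natCast (f : ℕ × ℕ → ℝ) (m : ℕ) :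
    ∑' x : ℕ × ℕ, (if (x.1 : ℤ) - x.2 = -m then f x else 0) = ∑' j, f (j, m + j) := by
  refine ((Equiv.prodComm ℕ ℕ).tsum_eq _).symm.trans <|
    (tsum_congr fun x => ?_).trans (tsum_ite_sub_eq_natCast (fun x => f x.swap) m)
  show (if (x.2 : ℤ) - x.1 = -m then f x.swap else 0) =
    if (x.1 : ℤ) - x.2 = m then f x.swap else 0
  congr 1
  simp only [eq_iff_iff]
  omega

end General

noncomputable def hankelOp (k ψ : ℤ → ℝ) (m : ℤ) : ℝ := ∑' n, k (m + n) * ψ n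

section HankelOp

variable {k φ ψ : ℤ → ℝ}

lemma summable_abs_comp_add_left (hk : Summable fun n => |k n|) (m : ℤ) :
    Summable fun n => |k (m + n)| :=
  (Equiv.addLeft m).summable_iff (f := fun n => |k n|) |>.mpr hk

lemma tsum_abs_comp_add_left (k : ℤ → ℝ) (m : ℤ) : ∑' n, |k (m + n)| = ∑' n, |k n| :=
  (Equiv.addLeft m).tsum_eq fun n => |k n|

lemma summable_abs_comp_add_mul_sq_fst (hk : Summable fun n => |k n|)
    (hφ : Summable fun n => φ n ^ 2) :
    Summable fun p : ℤ × ℤ => |k (p.1 + p.2)| * φ p.1 ^ 2 := by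
  refine (summable_prod_of_nonneg fun p => mul_nonneg (abs_nonneg _) (sq_nonneg _)).mpr
    ⟨fun m => (summable_abs_comp_add_left hk m).mul_right (φ m ^ 2), ?_⟩
  simp only [tsum_mul_right, tsum_abs_comp_add_left]
  exact hφ.mul_left (∑' n, |k n|)

lemma summable_abs_comp_add_mul_sq_snd (hk : Summable fun n => |k n|)
    (hφ : Summable fun n => φ n ^ 2) :
    Summable fun p : ℤ × ℤ => |k (p.1 + p.2)| * φ p.2 ^ 2 :=
  (summable_abs_comp_add_mul_sq_fst hk hφ).prod_symm.congr fun p => by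
    rw [Prod.fst_swap, Prod.snd_swap, add_comm]

lemma summable_abs_mul_hankelOp (hk : Summable fun n => |k n|)
    (hψ : Summable fun n => ψ n ^ 2) (m : ℤ) : Summable fun n => |k (m + n) * ψ n| :=
  (summable_abs_comp_add_left hk m).sq_of_abs.abs_mul_of_sq hψ

lemma hankelOp_sq_le (hk : Summable fun n => |k n|) (hψ : Summable fun n => ψ n ^ 2) (m : ℤ) :
    hankelOp k ψ m ^ 2 ≤ (∑' n, |k n|) * ∑' n, |k (m + n)| * ψ n ^ 2 := by
  rw [← tsum_abs_comp_add_left k m]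
  refine tsum_sq_le_tsum_mul_tsum_of_sq_le_mul (summable_abs_mul_hankelOp hk hψ m).of_abs
    (summable_abs_comp_add_left hk m) ((summable_abs_comp_add_mul_sq_snd hk hψ).prod_factor m)
    (fun _ => abs_nonneg _) (fun _ => by positivity) fun n => ?_
  rw [mul_pow, ← sq_abs (k _)]
  exact le_of_eq (by ring)

lemma summable_sq_hankelOp (hk : Summable fun n => |k n|) (hψ : Summable fun n => ψ n ^ 2) :
    Summable fun m => hankelOp k ψ m ^ 2 :=
  ((summable_abs_comp_add_mul_sq_snd hk hψ).prod.mul_left (∑' n, |k n|)).of_nonneg_of_le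
    (fun _ => sq_nonneg _) (hankelOp_sq_le hk hψ)

lemma tsum_mul_hankelOp_eq_tsum_hankelOp_mul (hk : Summable fun n => |k n|)
    (hφ : Summable fun n => φ n ^ 2) (hψ : Summable fun n => ψ n ^ 2) :
    ∑' m, φ m * hankelOp k ψ m = ∑' n, hankelOp k φ n * ψ n := by
  have hsummable : Summable (Function.uncurry fun m n => φ m * (k (m + n) * ψ n)) := by
    refine (((summable_abs_comp_add_mul_sq_fst hk hφ).add
      (summable_abs_comp_add_mul_sq_snd hk hψ)).div_const 2).of_norm_bounded fun p => ?_
    have := mul_le_mul_of_nonneg_left (two_mul_le_add_sq |φ p.1| |ψ p.2|)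
      (abs_nonneg (k (p.1 + p.2)))
    rw [sq_abs, sq_abs] at this
    simp only [Function.uncurry, norm_mul, Real.norm_eq_abs]
    linarith
  calc ∑' m, φ m * hankelOp k ψ m = ∑' m, ∑' n, φ m * (k (m + n) * ψ n) := by
        simp only [hankelOp, tsum_mul_left]
    _ = ∑' n, ∑' m, φ m * (k (m + n) * ψ n) := hsummable.tsum_comm.symm
    _ = ∑' n, hankelOp k φ n * ψ n := by
        simp only [hankelOp, ← tsum_mul_right]
        exact tsum_congr fun n => tsum_congr fun m => by rw [add_comm n m]; ring

lemma hankelOp_hankelOp (hk : Summable fun n => |k n|)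
    (hortho : ∀ i j, ∑' n, k (i + n) * k (j + n) = if i = j then 1 else 0)
    (hψ : Summable fun n => ψ n ^ 2) : hankelOp k (hankelOp k ψ) = ψ := by
  funext m
  calc hankelOp k (hankelOp k ψ) m = ∑' n, k (m + n) * hankelOp k ψ n := rfl
    _ = ∑' j, hankelOp k (fun n => k (m + n)) j * ψ j :=
        tsum_mul_hankelOp_eq_tsum_hankelOp_mul hk (summable_abs_comp_add_left hk m).sq_of_abs hψ
    _ = ∑' j, if j = m then ψ j else 0 := tsum_congr fun j => by
        rw [hankelOp, hortho, ite_mul, one_mul, zero_mul]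
    _ = ψ m := tsum_ite_eq m ψ

lemma tsum_sq_hankelOp (hk : Summable fun n => |k n|)
    (hortho : ∀ i j, ∑' n, k (i + n) * k (j + n) = if i = j then 1 else 0)
    (hψ : Summable fun n => ψ n ^ 2) : ∑' m, hankelOp k ψ m ^ 2 = ∑' n, ψ n ^ 2 := by
  simp only [sq]
  rw [tsum_mul_hankelOp_eq_tsum_hankelOp_mul hk
      (by simpa only [sq] using summable_sq_hankelOp hk hψ) hψ,
    hankelOp_hankelOp hk hortho hψ]

end HankelOp

section Bessel

open Nat

variable (L : ℝ)

noncomputable def besselTerm (x : ℕ × ℕ) : ℝ := L ^ x.1 / x.1 ! * ((-L) ^ x.2 / x.2 !)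

lemma summable_abs_besselTerm : Summable fun x => |besselTerm L x| := by
  have h := Real.summable_pow_div_factorial |L|
  refine (h.mul_of_nonneg h (fun _ => by positivity) (fun _ => by positivity)).congr fun x => ?_
  simp [besselTerm, abs_mul, abs_div, abs_pow]

lemma tsum_ite_add_eq_besselTerm (N : ℤ) :
    ∑' x : ℕ × ℕ, (if (x.1 : ℤ) + x.2 = N then besselTerm L x else 0) =
      if N = 0 then 1 else 0 := by
  rcases lt_or_ge N 0 with hN | hN
  · rw [if_neg hN.ne]
    exact (tsum_congr fun x => if_neg (by omega)).trans tsum_zero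
  · lift N to ℕ using hN
    rw [tsum_eq_sum (s := antidiagonal N) fun x hx =>
        if_neg fun h => hx (mem_antidiagonal.mpr (by omega)),
      Finset.sum_congr rfl fun x hx => if_pos (by rw [← mem_antidiagonal.mp hx]; push_cast; rfl)]
    unfold besselTerm
    rw [sum_antidiagonal_pow_div_factorial_mul, add_neg_cancel]
    by_cases hN : N = 0 <;> simp [hN]

lemma besselJint_eq_tsum_ite (n : ℤ) :
    besselJint L n = ∑' x : ℕ × ℕ, if (x.1 : ℤ) - x.2 = n then besselTerm L x else 0 := by
  rcases le_or_gt 0 n with hn | hn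
  · lift n to ℕ using hn
    rw [besselJint, if_pos (by positivity), Int.toNat_natCast, besselJnat,
      tsum_ite_sub_eq_natCast]
    refine tsum_congr fun j => ?_
    simp only [besselTerm, neg_pow L]
    ring
  · obtain ⟨m, rfl⟩ : ∃ m : ℕ, n = -m := ⟨(-n).toNat, by omega⟩
    rw [besselJint, if_neg (by omega), neg_neg, Int.toNat_natCast, besselJnat,
      tsum_ite_sub_eq_neg_natCast, ← tsum_mul_left]
    refine tsum_congr fun j => ?_
    simp only [besselTerm, neg_pow L]
    ring

lemma summable_abs_besselJint : Summable fun n => |besselJint L n| := by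
  have hfiber := (summable_abs_besselTerm L).hasSum.tsum_ite_fiberwise
    fun x : ℕ × ℕ => (x.1 : ℤ) - x.2
  refine hfiber.summable.of_nonneg_of_le (fun _ => abs_nonneg _) fun n => ?_
  rw [besselJint_eq_tsum_ite]
  have habs : ∀ x : ℕ × ℕ, ‖if (x.1 : ℤ) - x.2 = n then besselTerm L x else 0‖ =
      if (x.1 : ℤ) - x.2 = n then |besselTerm L x| else 0 := fun x => by
    split_ifs <;> simp
  refine (norm_tsum_le_tsum_norm ((summable_abs_besselTerm L).of_nonneg_of_le
    (fun _ => norm_nonneg _) fun x => ?_)).trans_eq (tsum_congr habs)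
  rw [habs]
  split_ifs <;> simp

lemma summable_ite_besselTerm_mul (P : (ℕ × ℕ) × (ℕ × ℕ) → Prop) [DecidablePred P] :
    Summable fun z => if P z then besselTerm L z.1 * besselTerm L z.2 else 0 := by
  have h := summable_abs_besselTerm L
  refine (Summable.mul_norm (f := besselTerm L) (g := besselTerm L) h h).of_norm_bounded
    fun z => ?_
  split_ifs
  · simp [norm_mul]
  · rw [norm_zero]
    positivity

lemma tsum_besselJint_mul_besselJint_add_eq_tsum_ite (d : ℤ) :
    ∑' j, besselJint L j * besselJint L (j + d) =
      ∑' z : (ℕ × ℕ) × (ℕ × ℕ), if (z.2.1 : ℤ) - z.2.2 = (z.1.1 : ℤ) - z.1.2 + d then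
        besselTerm L z.1 * besselTerm L z.2 else 0 := by
  have hJ : ∀ n, |besselJint L n| ≤ ∑' m, |besselJint L m| := fun n =>
    (summable_abs_besselJint L).le_tsum n fun _ _ => abs_nonneg _
  have hsummable :
      Summable fun x : ℕ × ℕ => besselTerm L x * besselJint L ((x.1 : ℤ) - x.2 + d) :=
    ((summable_abs_besselTerm L).mul_right _).of_norm_bounded fun x => by
      rw [norm_mul, Real.norm_eq_abs, Real.norm_eq_abs]
      exact mul_le_mul_of_nonneg_left (hJ _) (abs_nonneg _)
  calc ∑' j, besselJint L j * besselJint L (j + d)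
      = ∑' x : ℕ × ℕ, besselTerm L x * besselJint L ((x.1 : ℤ) - x.2 + d) := by
        rw [tsum_mul_comp_eq_tsum_fiberwise (fun j => besselJint L (j + d))
          (fun x : ℕ × ℕ => (x.1 : ℤ) - x.2) hsummable]
        simp only [← besselJint_eq_tsum_ite]
    _ = ∑' x : ℕ × ℕ, ∑' y : ℕ × ℕ, if (y.1 : ℤ) - y.2 = (x.1 : ℤ) - x.2 + d then
          besselTerm L x * besselTerm L y else 0 := by
        refine tsum_congr fun x => ?_
        rw [besselJint_eq_tsum_ite, ← tsum_mul_left]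
        simp only [mul_ite, mul_zero]
    _ = _ := (summable_ite_besselTerm_mul L
          fun z => (z.2.1 : ℤ) - z.2.2 = (z.1.1 : ℤ) - z.1.2 + d).tsum_prod.symm

lemma tsum_ite_sub_besselTerm_mul (d : ℤ) :
    ∑' z : (ℕ × ℕ) × (ℕ × ℕ), (if (z.2.1 : ℤ) - z.2.2 = (z.1.1 : ℤ) - z.1.2 + d then
      besselTerm L z.1 * besselTerm L z.2 else 0) = if d = 0 then 1 else 0 := by
  -- Exchanging `q` and `s` in `((p, q), (r, s))` turns the constraint on the orders `p - q`,
  -- `r - s` into one on the degrees `p + s`, `r + q`.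
  let σ : (ℕ × ℕ) × (ℕ × ℕ) ≃ (ℕ × ℕ) × (ℕ × ℕ) :=
    { toFun := fun z => ((z.1.1, z.2.2), (z.2.1, z.1.2))
      invFun := fun z => ((z.1.1, z.2.2), (z.2.1, z.1.2))
      left_inv := fun _ => rfl
      right_inv := fun _ => rfl }
  calc _ = ∑' z : (ℕ × ℕ) × (ℕ × ℕ), if (z.2.1 : ℤ) + z.2.2 = (z.1.1 : ℤ) + z.1.2 + d then
          besselTerm L z.1 * besselTerm L z.2 else 0 := by
        rw [← σ.tsum_eq]
        refine tsum_congr fun z => ?_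
        show (if (z.2.1 : ℤ) - z.1.2 = (z.1.1 : ℤ) - z.2.2 + d then
          besselTerm L (z.1.1, z.2.2) * besselTerm L (z.2.1, z.1.2) else 0) = _
        by_cases h : (z.2.1 : ℤ) + z.2.2 = (z.1.1 : ℤ) + z.1.2 + d
        · rw [if_pos (by omega), if_pos h]
          simp only [besselTerm]
          ring
        · rw [if_neg (by omega), if_neg h]
    _ = ∑' u : ℕ × ℕ, besselTerm L u * if (u.1 : ℤ) + u.2 + d = 0 then 1 else 0 := by
        rw [(summable_ite_besselTerm_mul L
          fun z => (z.2.1 : ℤ) + z.2.2 = (z.1.1 : ℤ) + z.1.2 + d).tsum_prod]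
        refine tsum_congr fun u => ?_
        rw [← tsum_ite_add_eq_besselTerm L, ← tsum_mul_left]
        simp only [mul_ite, mul_zero]
    _ = ∑' u : ℕ × ℕ, if (u.1 : ℤ) + u.2 = -d then besselTerm L u else 0 := by
        refine tsum_congr fun u => ?_
        rw [mul_ite, mul_one, mul_zero]
        congr 1
        simp only [eq_iff_iff]
        omega
    _ = if d = 0 then 1 else 0 := by
        rw [tsum_ite_add_eq_besselTerm]
        exact if_congr neg_eq_zero rfl rfl

lemma tsum_besselJint_add_mul_besselJint_add (i j : ℤ) :
    ∑' n, besselJint L (i + n) * besselJint L (j + n) = if i = j then 1 else 0 := by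
  calc ∑' n, besselJint L (i + n) * besselJint L (j + n)
      = ∑' n, besselJint L (i + n) * besselJint L (i + n + (j - i)) :=
        tsum_congr fun n => by rw [show i + n + (j - i) = j + n by ring]
    _ = ∑' n, besselJint L n * besselJint L (n + (j - i)) :=
        (Equiv.addLeft i).tsum_eq fun n => besselJint L n * besselJint L (n + (j - i))
    _ = if i = j then 1 else 0 := by
        rw [tsum_besselJint_mul_besselJint_add_eq_tsum_ite, tsum_ite_sub_besselTerm_mul]
        exact if_congr (sub_eq_zero.trans eq_comm) rfl rfl

end Bessel

theorem besselJ_kernel_unitary_involution_general (L : ℝ) (ψ : ℤ → ℝ)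
    (hψ : Summable (fun n : ℤ => (ψ n) ^ 2)) :
    (∀ m : ℤ, Summable (fun n : ℤ => |besselJint L (m + n + 1) * ψ n|)) ∧
    Summable (fun m : ℤ => (∑' n : ℤ, besselJint L (m + n + 1) * ψ n) ^ 2) ∧
    ((∑' m : ℤ, (∑' n : ℤ, besselJint L (m + n + 1) * ψ n) ^ 2) = (∑' n : ℤ, (ψ n) ^ 2)) ∧
    (∀ m : ℤ,
      (∑' n : ℤ, besselJint L (m + n + 1) * (∑' k : ℤ, besselJint L (n + k + 1) * ψ k)) =
        ψ m) := by
  have hk : Summable fun n => |besselJint L (n + 1)| :=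
    (summable_abs_besselJint L).comp_injective (add_left_injective 1)
  have hortho : ∀ i j : ℤ, ∑' n, besselJint L (i + n + 1) * besselJint L (j + n + 1) =
      if i = j then 1 else 0 := fun i j => by
    simpa only [add_right_comm _ _ (1 : ℤ), add_left_inj] using
      tsum_besselJint_add_mul_besselJint_add L (i + 1) (j + 1)
  let k : ℤ → ℝ := fun n => besselJint L (n + 1)
  exact ⟨summable_abs_mul_hankelOp (k := k) hk hψ, summable_sq_hankelOp (k := k) hk hψ,
    tsum_sq_hankelOp (k := k) hk hortho hψ, congrFun (hankelOp_hankelOp (k := k) hk hortho hψ)⟩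

/-- for fixed `L > 0` and square-summable `ψ : ℤ' → ℝ`, the series
`(𝒥ψ)(a) = ∑_{b∈ℤ'} J_{a+b}(2L) ψ(b)` converges absolutely for every `a ∈ ℤ'`; the function
`𝒥ψ` is square-summable with `∑_a (𝒥ψ)(a)² = ∑_b ψ(b)²`, and `𝒥(𝒥ψ) = ψ`:
the kernel `J_{a+b}(2L)` induces a unitary involution of `ℓ²(ℤ')`. -/
theorem besselJ_kernel_unitary_involution (L : ℝ) (hL : 0 < L) (ψ : ℤ → ℝ)
    (hψ : Summable (fun n : ℤ => (ψ n) ^ 2)) :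
    (∀ m : ℤ, Summable (fun n : ℤ => |besselJint L (m + n + 1) * ψ n|)) ∧
    Summable (fun m : ℤ => (∑' n : ℤ, besselJint L (m + n + 1) * ψ n) ^ 2) ∧
    ((∑' m : ℤ, (∑' n : ℤ, besselJint L (m + n + 1) * ψ n) ^ 2) = (∑' n : ℤ, (ψ n) ^ 2)) ∧
    (∀ m : ℤ,
      (∑' n : ℤ, besselJint L (m + n + 1) * (∑' k : ℤ, besselJint L (n + k + 1) * ψ k)) =
        ψ m) :=
  besselJ_kernel_unitary_involution_general L ψ hψ
end

section
/- There exists a constant C > 0 such that for all a ∈ ℤ' and all L ∈ (0,1], | K^Be(a,a) − ( 1_{a<0} + L²·(1_{a=1/2} − 1_{a=−1/2}) ) | ≤ C·L⁴; that is, uniformly in a ∈ ℤ' one has K^Be(a,a) = 1_{a<0} + L²(δ_{a,1/2} − δ_{a,−1/2}) + O(L⁴) as L → 0. -/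
/-- Diagonal of the discrete Bessel kernel, `K^Be(m + 1/2, m + 1/2)`. -/
noncomputable def KBeDiag (L : ℝ) (m : ℤ) : ℝ :=
  ∑' j : ℕ, besselJint L (m + j + 1) * besselJint L (m + j + 1)


/-!
Write `T n = ∑_{j ≥ 0} J_{n+j}(2L)²`. Since `J_{-n}² = J_n²`, the diagonal
`K^Be(m + 1/2, m + 1/2)` is `T (m + 1)` for `m ≥ 0`, and `1 - T |m|` for `m < 0` by the identity
`∑_{n ∈ ℤ} J_n(2L)² = 1`.
The power series gives `T n = O(L^{2n})` and `J_1(2L) = L + O(L³)`, hence `T 1 = L² + O(L⁴)`;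
this settles `m = 0` and `m = -1`, and every other `m` only involves some `T n` with `n ≥ 2`.

The identity is a Cauchy-product computation: grouping the terms of `∑ₙ Jₙ²` by the power
`L^{2N}` they carry, the coefficient of `L^{2N}` is `(∑_{j ≤ N} (-1)^j C(N, j) / N!)²`, which
vanishes for `N > 0`.
-/

open Finset
open scoped Nat

lemma hasSum_pow_div_factorial_exp (x : ℝ) :
    HasSum (fun n : ℕ => x ^ n / n !) (Real.exp x) := by
  simpa [Real.exp_eq_exp_ℝ] using NormedSpace.expSeries_div_hasSum_exp x

noncomputable def besselJnatTerm (L : ℝ) (n j : ℕ) : ℝ :=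
  (-1 : ℝ) ^ j * L ^ (2 * j + n) / (j ! * (n + j)!)

lemma besselJnat_eq_tsum (L : ℝ) (n : ℕ) : besselJnat L n = ∑' j, besselJnatTerm L n j := rfl

lemma abs_besselJnatTerm_add_le (L : ℝ) (n t j : ℕ) :
    |besselJnatTerm L n (j + t)| ≤ |L| ^ (n + 2 * t) / n ! * ((L ^ 2) ^ j / j !) := by
  have hpow : |L| ^ (2 * (j + t) + n) = |L| ^ (n + 2 * t) * (L ^ 2) ^ j := by
    rw [← sq_abs, ← pow_mul, ← pow_add]; ring_nf
  have hfac : (j ! * n ! : ℝ) ≤ (j + t)! * (n + (j + t))! := by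
    exact_mod_cast Nat.mul_le_mul (Nat.factorial_le (by omega)) (Nat.factorial_le (by omega))
  rw [besselJnatTerm, abs_div, abs_mul, abs_pow, abs_neg, abs_one, one_pow, one_mul, abs_pow, hpow,
    abs_of_pos (a := ((j + t)! * (n + (j + t))! : ℝ)) (by positivity), div_mul_div_comm,
    mul_comm (n ! : ℝ)]
  exact div_le_div_of_nonneg_left (by positivity) (by positivity) hfac

lemma summable_abs_besselJnatTerm_add (L : ℝ) (n t : ℕ) :
    Summable fun j => |besselJnatTerm L n (j + t)| :=
  .of_nonneg_of_le (fun _ => abs_nonneg _) (abs_besselJnatTerm_add_le L n t)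
    ((Real.summable_pow_div_factorial _).mul_left _)

lemma abs_besselJnat_sub_sum_range_le (L : ℝ) (n t : ℕ) :
    |besselJnat L n - ∑ j ∈ range t, besselJnatTerm L n j| ≤
      |L| ^ (n + 2 * t) / n ! * Real.exp (L ^ 2) := by
  have hs := summable_abs_besselJnatTerm_add L n t
  have hsummable : Summable (besselJnatTerm L n) := (summable_abs_besselJnatTerm_add L n 0).of_abs
  rw [besselJnat_eq_tsum, ← hsummable.sum_add_tsum_nat_add t, add_sub_cancel_left,
    ← ((hasSum_pow_div_factorial_exp _).mul_left _).tsum_eq]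
  have hnorm : |∑' j, besselJnatTerm L n (j + t)| ≤ ∑' j, |besselJnatTerm L n (j + t)| := by
    simpa only [Real.norm_eq_abs] using
      norm_tsum_le_tsum_norm (f := fun j => besselJnatTerm L n (j + t))
        (by simpa only [Real.norm_eq_abs] using hs)
  exact hnorm.trans (hs.tsum_le_tsum (abs_besselJnatTerm_add_le L n t)
    ((Real.summable_pow_div_factorial _).mul_left _))

lemma abs_besselJnat_le (L : ℝ) (n : ℕ) :
    |besselJnat L n| ≤ |L| ^ n / n ! * Real.exp (L ^ 2) := by
  simpa using abs_besselJnat_sub_sum_range_le L n 0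

lemma abs_besselJnat_one_sub_le (L : ℝ) :
    |besselJnat L 1 - L| ≤ |L| ^ 3 * Real.exp (L ^ 2) := by
  simpa [besselJnatTerm] using abs_besselJnat_sub_sum_range_le L 1 1

lemma sq_besselJnat_add_le (L : ℝ) (n j : ℕ) :
    besselJnat L (n + j) ^ 2 ≤ L ^ (2 * n) * Real.exp (L ^ 2) ^ 2 * ((L ^ 2) ^ j / j !) := by
  have hfac : (j ! : ℝ) ≤ ((n + j)! : ℝ) ^ 2 := by
    have hle : j ! ≤ (n + j)! := Nat.factorial_le (by omega)
    have hpos : 1 ≤ (n + j)! := Nat.one_le_iff_ne_zero.mpr (Nat.factorial_ne_zero _)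
    exact_mod_cast (by nlinarith : j ! ≤ (n + j)! ^ 2)
  have hpow : (|L| ^ (n + j)) ^ 2 = L ^ (2 * n) * (L ^ 2) ^ j := by
    rw [← abs_pow, sq_abs]; ring
  have hL2n := (even_two_mul n).pow_nonneg L
  calc besselJnat L (n + j) ^ 2 ≤ (|L| ^ (n + j) / (n + j)! * Real.exp (L ^ 2)) ^ 2 := by
        rw [← sq_abs]; gcongr; exact abs_besselJnat_le L (n + j)
    _ = L ^ (2 * n) * Real.exp (L ^ 2) ^ 2 * ((L ^ 2) ^ j / ((n + j)! : ℝ) ^ 2) := by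
        rw [mul_pow, div_pow, hpow]; ring
    _ ≤ _ := by gcongr

noncomputable def besselSqTail (L : ℝ) (n : ℕ) : ℝ := ∑' j, besselJnat L (n + j) ^ 2

lemma summable_sq_besselJnat_add (L : ℝ) (n : ℕ) :
    Summable fun j => besselJnat L (n + j) ^ 2 :=
  .of_nonneg_of_le (fun _ => sq_nonneg _) (sq_besselJnat_add_le L n)
    ((Real.summable_pow_div_factorial _).mul_left _)

lemma besselSqTail_nonneg (L : ℝ) (n : ℕ) : 0 ≤ besselSqTail L n :=
  tsum_nonneg fun _ => sq_nonneg _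

lemma besselSqTail_le (L : ℝ) (n : ℕ) :
    besselSqTail L n ≤ L ^ (2 * n) * Real.exp (L ^ 2) ^ 3 := by
  calc besselSqTail L n ≤ ∑' j, L ^ (2 * n) * Real.exp (L ^ 2) ^ 2 * ((L ^ 2) ^ j / j !) :=
        (summable_sq_besselJnat_add L n).tsum_le_tsum (sq_besselJnat_add_le L n)
          ((Real.summable_pow_div_factorial _).mul_left _)
    _ = _ := by rw [((hasSum_pow_div_factorial_exp _).mul_left _).tsum_eq]; ring

lemma besselSqTail_le_of_two_le {L : ℝ} (hL : |L| ≤ 1) {n : ℕ} (hn : 2 ≤ n) :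
    besselSqTail L n ≤ Real.exp (L ^ 2) ^ 3 * L ^ 4 := by
  have hL2 : L ^ 2 ≤ 1 := by rw [← sq_abs]; exact pow_le_one₀ (abs_nonneg L) hL
  calc besselSqTail L n ≤ (L ^ 2) ^ n * Real.exp (L ^ 2) ^ 3 := by
        rw [← pow_mul]; exact besselSqTail_le L n
    _ ≤ (L ^ 2) ^ 2 * Real.exp (L ^ 2) ^ 3 := by
        gcongr ?_ * _
        exact pow_le_pow_of_le_one (sq_nonneg L) hL2 hn
    _ = _ := by ring

lemma besselSqTail_eq_sq_add (L : ℝ) (n : ℕ) :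
    besselSqTail L n = besselJnat L n ^ 2 + besselSqTail L (n + 1) := by
  rw [besselSqTail, (summable_sq_besselJnat_add L n).tsum_eq_zero_add, besselSqTail]
  simp only [add_zero, add_assoc, add_comm 1]

lemma abs_besselSqTail_one_sub_sq_le (L : ℝ) :
    |besselSqTail L 1 - L ^ 2| ≤
      (Real.exp (L ^ 2) ^ 3 + Real.exp (L ^ 2) ^ 2 + Real.exp (L ^ 2)) * L ^ 4 := by
  set E := Real.exp (L ^ 2)
  have hJ1 : |besselJnat L 1| ≤ |L| * E := by simpa using abs_besselJnat_le L 1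
  have hsum : |besselJnat L 1 + L| ≤ |L| * (E + 1) := by
    linarith [abs_add_le (besselJnat L 1) L]
  have hsq : |besselJnat L 1 ^ 2 - L ^ 2| ≤ L ^ 4 * (E ^ 2 + E) := by
    rw [sq_sub_sq, abs_mul]
    calc |besselJnat L 1 + L| * |besselJnat L 1 - L| ≤ |L| * (E + 1) * (|L| ^ 3 * E) := by
          gcongr
          exact abs_besselJnat_one_sub_le L
      _ = L ^ 4 * (E ^ 2 + E) := by rw [← (by decide : Even 4).pow_abs L]; ring
  have htail : besselSqTail L (1 + 1) ≤ L ^ 4 * E ^ 3 := besselSqTail_le L 2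
  have hnonneg := besselSqTail_nonneg L (1 + 1)
  rw [abs_le] at hsq ⊢
  rw [besselSqTail_eq_sq_add L 1]
  constructor <;> linarith

noncomputable def besselJintTerm (L : ℝ) (n : ℤ) (j : ℕ) : ℝ :=
  if 0 ≤ n + j then (-1 : ℝ) ^ j * L ^ (j + (n + j).toNat) / (j ! * (n + j).toNat !) else 0

lemma abs_besselJintTerm_le (L : ℝ) (n : ℤ) (j : ℕ) :
    |besselJintTerm L n j| ≤ Real.exp |L| * (|L| ^ j / j !) := by
  unfold besselJintTerm
  split_ifs
  · rw [abs_div, abs_mul, abs_pow, abs_neg, abs_one, one_pow, one_mul, abs_pow,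
      abs_of_pos (a := (j ! * (n + j).toNat ! : ℝ)) (by positivity), pow_add, mul_div_mul_comm,
      mul_comm]
    gcongr
    exact Real.pow_div_factorial_le_exp _ (abs_nonneg L) _
  · rw [abs_zero]; positivity

lemma summable_abs_besselJintTerm (L : ℝ) (n : ℤ) :
    Summable fun j => |besselJintTerm L n j| :=
  .of_nonneg_of_le (fun _ => abs_nonneg _) (abs_besselJintTerm_le L n)
    ((Real.summable_pow_div_factorial _).mul_left _)

lemma besselJint_eq_tsum (L : ℝ) (n : ℤ) : besselJint L n = ∑' j, besselJintTerm L n j := by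
  rcases le_or_gt 0 n with hn | hn
  · rw [besselJint, if_pos hn, besselJnat_eq_tsum]
    refine tsum_congr fun j => ?_
    rw [besselJintTerm, if_pos (by omega), besselJnatTerm,
      show (n + j).toNat = n.toNat + j by omega, show j + (n.toNat + j) = 2 * j + n.toNat by omega]
  · obtain ⟨m, rfl⟩ : ∃ m : ℕ, n = -(m : ℤ) := ⟨(-n).toNat, by omega⟩
    have hvanish : ∀ j ∈ range m, besselJintTerm L (-m) j = 0 := fun j hj => by
      rw [besselJintTerm, if_neg (by simp at hj; omega)]
    rw [besselJint, if_neg (by omega), neg_neg, Int.toNat_natCast, besselJnat_eq_tsum,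
      ← tsum_mul_left, ← (summable_abs_besselJintTerm L _).of_abs.sum_add_tsum_nat_add m,
      sum_eq_zero hvanish, zero_add]
    refine tsum_congr fun j => ?_
    rw [besselJintTerm, if_pos (by omega),
      show (-(m : ℤ) + ((j + m : ℕ) : ℤ)).toNat = j by omega, besselJnatTerm,
      show j + m + j = 2 * j + m by omega, add_comm m j, pow_add]
    ring

/-- The product `besselJintTerm L n j * besselJintTerm L n k` carries the power
`L ^ (2 * (n + j + k))`; this equivalence indexes it by `N = n + j + k` instead of `n`. -/
def degreeEquiv : ℤ × ℕ × ℕ ≃ ℤ × ℕ × ℕ where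
  toFun p := (p.1 - p.2.1 - p.2.2, p.2)
  invFun p := (p.1 + p.2.1 + p.2.2, p.2)
  left_inv p := Prod.ext (by dsimp only; ring) rfl
  right_inv p := Prod.ext (by dsimp only; ring) rfl

noncomputable def besselProdCoeff (L : ℝ) (N : ℤ) (j : ℕ) : ℝ :=
  if (j : ℤ) ≤ N then (-1 : ℝ) ^ j * L ^ N.toNat / (j ! * (N - j).toNat !) else 0

lemma besselJintTerm_mul_besselJintTerm (L : ℝ) (N : ℤ) (j k : ℕ) :
    besselJintTerm L (N - j - k) j * besselJintTerm L (N - j - k) k =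
      besselProdCoeff L N j * besselProdCoeff L N k := by
  unfold besselJintTerm besselProdCoeff
  by_cases hj : (j : ℤ) ≤ N
  · by_cases hk : (k : ℤ) ≤ N
    · rw [if_pos (by omega), if_pos (by omega), if_pos hj, if_pos hk,
        show (N - j - k + j).toNat = (N - k).toNat by omega,
        show (N - j - k + k).toNat = (N - j).toNat by omega, div_mul_div_comm, div_mul_div_comm,
        mul_mul_mul_comm, ← pow_add, ← pow_add,
        show j + (N - k).toNat + (k + (N - j).toNat) = N.toNat + N.toNat by omega]
      ring
    · rw [if_neg (by omega), if_neg hk, zero_mul, mul_zero]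
  · rw [if_neg (show ¬ (0 : ℤ) ≤ N - j - k + k by omega), if_neg hj, mul_zero, zero_mul]

lemma besselProdCoeff_of_neg (L : ℝ) {N : ℤ} (hN : N < 0) (j : ℕ) :
    besselProdCoeff L N j = 0 :=
  if_neg (by omega)

lemma besselProdCoeff_natCast (L : ℝ) (n j : ℕ) :
    besselProdCoeff L n j = L ^ n / n ! * ((-1) ^ j * n.choose j) := by
  unfold besselProdCoeff
  split_ifs with hj
  · have hj : j ≤ n := by exact_mod_cast hj
    rw [Int.toNat_natCast, show ((n : ℤ) - j).toNat = n - j by omega, Nat.cast_choose ℝ hj]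
    field_simp
  · rw [Nat.choose_eq_zero_of_lt (by omega)]
    simp

lemma besselProdCoeff_natCast_eq_zero (L : ℝ) (n : ℕ) :
    ∀ j ∉ range (n + 1), besselProdCoeff L n j = 0 := fun j hj => by
  rw [besselProdCoeff_natCast, Nat.choose_eq_zero_of_lt (by simpa [Nat.lt_succ_iff] using hj)]
  simp

lemma hasSum_besselProdCoeff (L : ℝ) (N : ℤ) :
    HasSum (besselProdCoeff L N) (if N = 0 then 1 else 0) := by
  rcases lt_or_ge N 0 with hN | hN
  · rw [if_neg hN.ne, funext (besselProdCoeff_of_neg L hN)]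
    exact hasSum_zero
  obtain ⟨n, rfl⟩ : ∃ n : ℕ, N = n := ⟨N.toNat, by omega⟩
  have hfin := hasSum_sum_of_ne_finset_zero (L := .unconditional ℕ)
    (besselProdCoeff_natCast_eq_zero L n)
  convert hfin using 1
  have halt : ∑ j ∈ range (n + 1), (-1 : ℝ) ^ j * n.choose j = if n = 0 then 1 else 0 := by
    exact_mod_cast Int.alternating_sum_range_choose (n := n)
  simp_rw [besselProdCoeff_natCast, ← mul_sum, halt]
  split_ifs <;> simp_all

lemma hasSum_abs_besselProdCoeff (L : ℝ) (n : ℕ) :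
    HasSum (fun j => |besselProdCoeff L n j|) ((2 * |L|) ^ n / n !) := by
  have hfin := hasSum_sum_of_ne_finset_zero (L := .unconditional ℕ)
    (f := fun j => |besselProdCoeff L n j|)
    (fun j hj => by rw [besselProdCoeff_natCast_eq_zero L n j hj, abs_zero])
  convert hfin using 1
  have hbinom : ∑ j ∈ range (n + 1), (n.choose j : ℝ) = 2 ^ n := by
    exact_mod_cast Nat.sum_range_choose n
  simp_rw [besselProdCoeff_natCast, abs_mul, abs_div, abs_pow, abs_neg, abs_one, one_pow, one_mul,
    Nat.abs_cast, ← mul_sum, hbinom]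
  ring

lemma summable_norm_besselProdCoeff (L : ℝ) (N : ℤ) :
    Summable fun j => ‖besselProdCoeff L N j‖ := by
  rcases lt_or_ge N 0 with hN | hN
  · simp only [besselProdCoeff_of_neg L hN, norm_zero]
    exact summable_zero
  obtain ⟨n, rfl⟩ : ∃ n : ℕ, N = n := ⟨N.toNat, by omega⟩
  simpa only [Real.norm_eq_abs] using (hasSum_abs_besselProdCoeff L n).summable

lemma summable_besselProdCoeff_mul (L : ℝ) :
    Summable fun p : ℤ × ℕ × ℕ =>
      besselProdCoeff L p.1 p.2.1 * besselProdCoeff L p.1 p.2.2 := by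
  have hnorm (N : ℤ) : Summable fun j => ‖|besselProdCoeff L N j|‖ := by
    simpa only [norm_abs_eq_norm] using summable_norm_besselProdCoeff L N
  have hfiber (n : ℕ) :
      ∑' jk : ℕ × ℕ, |besselProdCoeff L n jk.1 * besselProdCoeff L n jk.2| =
        ((2 * |L|) ^ n / n !) ^ 2 := by
    simp_rw [abs_mul]
    rw [← tsum_mul_tsum_of_summable_norm (hnorm n) (hnorm n),
      (hasSum_abs_besselProdCoeff L n).tsum_eq, sq]
  refine Summable.of_abs ((summable_prod_of_nonneg fun p => abs_nonneg _).mpr ⟨fun N => ?_, ?_⟩)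
  · simp_rw [abs_mul]
    exact summable_mul_of_summable_norm (f := fun j => |besselProdCoeff L N j|)
      (g := fun j => |besselProdCoeff L N j|) (hnorm N) (hnorm N)
  · refine .of_nat_of_neg_add_one ?_ ?_
    · simp_rw [hfiber]
      refine .of_nonneg_of_le (fun _ => sq_nonneg _) (fun n => ?_)
        ((Real.summable_pow_div_factorial (2 * |L|)).mul_left (Real.exp (2 * |L|)))
      have hle := Real.pow_div_factorial_le_exp (2 * |L|) (by positivity) n
      rw [sq]
      gcongr
    · refine summable_zero.congr fun n => ?_
      have hN : -((n : ℤ) + 1) < 0 := by omega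
      simp only [besselProdCoeff_of_neg L hN, mul_zero, abs_zero, tsum_zero]

theorem hasSum_besselJint_mul_self (L : ℝ) :
    HasSum (fun n : ℤ => besselJint L n * besselJint L n) 1 := by
  set F : ℤ × ℕ × ℕ → ℝ := fun p =>
    besselJintTerm L p.1 p.2.1 * besselJintTerm L p.1 p.2.2
  set G : ℤ × ℕ × ℕ → ℝ := fun p =>
    besselProdCoeff L p.1 p.2.1 * besselProdCoeff L p.1 p.2.2
  have hFG : F ∘ degreeEquiv = G :=
    funext fun p => besselJintTerm_mul_besselJintTerm L p.1 p.2.1 p.2.2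
  have hGfiber (N : ℤ) : HasSum (fun jk : ℕ × ℕ => G (N, jk)) (if N = 0 then 1 else 0) := by
    have h := hasSum_besselProdCoeff L N
    have hnorm := summable_norm_besselProdCoeff L N
    have hprod := h.mul h (summable_mul_of_summable_norm (f := besselProdCoeff L N)
      (g := besselProdCoeff L N) hnorm hnorm)
    simpa only [ite_zero_mul_ite_zero, and_self, mul_one] using hprod
  have hG : HasSum G 1 := by
    have hG' := (summable_besselProdCoeff_mul L).hasSum
    rwa [(hG'.prod_fiberwise hGfiber).unique (hasSum_ite_eq 0 1)] at hG'
  have hF : HasSum F 1 := degreeEquiv.hasSum_iff.mp (hFG ▸ hG)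
  refine hF.prod_fiberwise fun n => ?_
  have hnorm : Summable fun j => ‖besselJintTerm L n j‖ := by
    simpa only [Real.norm_eq_abs] using summable_abs_besselJintTerm L n
  have h := (summable_abs_besselJintTerm L n).of_abs.hasSum
  rw [besselJint_eq_tsum]
  show HasSum (fun jk : ℕ × ℕ => besselJintTerm L n jk.1 * besselJintTerm L n jk.2) _
  exact h.mul h (summable_mul_of_summable_norm (f := besselJintTerm L n) (g := besselJintTerm L n)
    hnorm hnorm)

lemma besselJint_mul_self (L : ℝ) (n : ℤ) :
    besselJint L n * besselJint L n = besselJnat L n.natAbs ^ 2 := by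
  rw [besselJint]
  split_ifs
  · rw [sq, show n.toNat = n.natAbs by omega]
  · rw [show (-n).toNat = n.natAbs by omega, ← sq, mul_pow, pow_right_comm, neg_one_sq, one_pow,
      one_mul]

lemma KBeDiag_of_nonneg (L : ℝ) {m : ℤ} (hm : 0 ≤ m) :
    KBeDiag L m = besselSqTail L (m.toNat + 1) :=
  tsum_congr fun j => by
    rw [besselJint_mul_self, show (m + j + 1).natAbs = m.toNat + 1 + j by omega]

lemma KBeDiag_of_neg (L : ℝ) {m : ℤ} (hm : m < 0) :
    KBeDiag L m = 1 - besselSqTail L m.natAbs := by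
  set f : ℤ → ℝ := fun n => besselJint L n * besselJint L n
  have hshift : HasSum (fun n : ℤ => f (m + n + 1)) 1 :=
    ((Equiv.addLeft (m + 1)).hasSum_iff.mpr (hasSum_besselJint_mul_self L)).congr_fun
      fun n => congrArg f (add_right_comm m n 1)
  have hK : HasSum (fun k : ℕ => f (m + k + 1)) (KBeDiag L m) :=
    (hshift.summable.comp_injective Nat.cast_injective).hasSum
  have hT : HasSum (fun k : ℕ => f (m + -(k + 1) + 1)) (besselSqTail L m.natAbs) :=
    (summable_sq_besselJnat_add L m.natAbs).hasSum.congr_fun fun k => by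
      simp only [f, besselJint_mul_self, show (m + -(k + 1) + 1).natAbs = m.natAbs + k by omega]
  have hsplit := HasSum.of_nat_of_neg_add_one (f := fun n : ℤ => f (m + n + 1)) hK hT
  linarith [hshift.unique hsplit]

lemma abs_KBeDiag_sub_le {L : ℝ} (hL : |L| ≤ 1) (m : ℤ) :
    |KBeDiag L m - ((if m < 0 then (1 : ℝ) else 0) +
        L ^ 2 * ((if m = 0 then (1 : ℝ) else 0) - (if m = -1 then (1 : ℝ) else 0)))| ≤
      (Real.exp (L ^ 2) ^ 3 + Real.exp (L ^ 2) ^ 2 + Real.exp (L ^ 2)) * L ^ 4 := by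
  have hslack : Real.exp (L ^ 2) ^ 3 * L ^ 4 ≤
      (Real.exp (L ^ 2) ^ 3 + Real.exp (L ^ 2) ^ 2 + Real.exp (L ^ 2)) * L ^ 4 := by
    gcongr
    linarith [Real.exp_pos (L ^ 2), pow_pos (Real.exp_pos (L ^ 2)) 2]
  rcases (by omega : m ≤ -2 ∨ m = -1 ∨ m = 0 ∨ 1 ≤ m) with hm | rfl | rfl | hm
  · rw [KBeDiag_of_neg L (by omega), if_pos (by omega), if_neg (by omega), if_neg (by omega),
      sub_zero, mul_zero, add_zero, sub_sub_cancel_left, abs_neg,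
      abs_of_nonneg (besselSqTail_nonneg _ _)]
    exact (besselSqTail_le_of_two_le hL (by omega)).trans hslack
  · rw [KBeDiag_of_neg L (by omega), ← abs_neg]
    convert abs_besselSqTail_one_sub_sq_le L using 2
    norm_num
    ring
  · rw [KBeDiag_of_nonneg L le_rfl]
    simpa using abs_besselSqTail_one_sub_sq_le L
  · rw [KBeDiag_of_nonneg L (by omega), if_neg (by omega), if_neg (by omega), if_neg (by omega),
      sub_zero, mul_zero, add_zero, sub_zero, abs_of_nonneg (besselSqTail_nonneg _ _)]
    exact (besselSqTail_le_of_two_le hL (by omega)).trans hslack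

/-- uniformly in `a ∈ ℤ'`, as `L → 0`,
`K^Be(a,a) = 1_{a<0} + L² (δ_{a,1/2} - δ_{a,-1/2}) + O(L⁴)`. -/
theorem KBeDiag_small_L_expansion :
    ∃ C : ℝ, 0 < C ∧ ∀ m : ℤ, ∀ L : ℝ, L ∈ Set.Ioc (0 : ℝ) 1 →
      |KBeDiag L m -
          ((if m < 0 then (1 : ℝ) else 0) +
            L ^ 2 * ((if m = 0 then (1 : ℝ) else 0) - (if m = -1 then (1 : ℝ) else 0)))| ≤
        C * L ^ 4 := by
  refine ⟨Real.exp 1 ^ 3 + Real.exp 1 ^ 2 + Real.exp 1, by positivity,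
    fun m L ⟨hL0, hL1⟩ => ?_⟩
  have hE : Real.exp (L ^ 2) ≤ Real.exp 1 := Real.exp_le_exp.mpr (pow_le_one₀ hL0.le hL1)
  refine (abs_KBeDiag_sub_le (abs_le.mpr ⟨by linarith, hL1⟩) m).trans ?_
  gcongr
end
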